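/- arXiv:1703.03687 — 3 statements merged into one kernel-verified Lean document; each statement's English description precedes it below -/
import Mathlib

section
/- Let l, m : ℝ → ℝ² with l moving at speed at most 1 and m at speed at most 1+ε, and suppose ‖m(t) − l(t)‖ ≥ r − Δ > 0 throughout an interval [t_j, t_{j+1}] of length Δ. Let ξ(t) be a continuous determination of the angle of the vector m(t) − l(t). Then ξ(t) − ξ(t_j) ≤ 2·arcsin((2+ε)Δ / (2(r − Δ))) for all t ∈ [t_j, t_{j+1}], provided (2+ε)Δ ≤ 2(r − Δ). -/
open Set Complex

/-
Write `v = m − l` and `φ(s) = (ξ(s) − ξ(t_j))/2`. The norm of `v` stays at least `R = r − Δ`,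
and two vectors of norm at least `R` whose directions differ by the angle `2φ` are at distance at
least `2R|sin φ|`; since `v` moves at speed at most `2 + ε`, this gives
`2R|sin φ(s)| ≤ (2 + ε)(s − t_j) ≤ 2R`, with strict inequality before the end of the interval.
So `sin φ < 1` there, and by continuity `φ` cannot cross `π/2`; on `(-∞, π/2]` the bound
`sin φ ≤ (2 + ε)Δ/(2R)` then reads `φ ≤ arcsin((2 + ε)Δ/(2R))`.
-/

open scoped Real

lemma norm_sub_sub_sub_le {E : Type*} [SeminormedAddCommGroup E] (a b c d : E) :
    ‖a - b - (c - d)‖ ≤ ‖a - c‖ + ‖b - d‖ := by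
  rw [show a - b - (c - d) = (a - c) - (b - d) by abel]
  exact norm_sub_le _ _

/-- Radial projection onto the sphere of radius `R` is `1`-Lipschitz outside the ball. -/
lemma mul_norm_sub_le_norm_smul_sub_smul {F : Type*} [NormedAddCommGroup F]
    [InnerProductSpace ℝ F] {u w : F} (hu : ‖u‖ = 1) (hw : ‖w‖ = 1) {R a b : ℝ} (hR : 0 ≤ R)
    (ha : R ≤ a) (hb : R ≤ b) :
    R * ‖u - w‖ ≤ ‖a • u - b • w‖ := by
  have hinner : inner ℝ u w ≤ 1 := by
    simpa [hu, hw] using real_inner_le_norm u w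
  refine le_of_sq_le_sq ?_ (norm_nonneg _)
  rw [mul_pow, norm_sub_sq_real, norm_sub_sq_real, norm_smul, norm_smul, real_inner_smul_left,
    real_inner_smul_right, hu, hw, Real.norm_of_nonneg (hR.trans ha),
    Real.norm_of_nonneg (hR.trans hb)]
  nlinarith [mul_le_mul ha hb hR (hR.trans ha), sq_nonneg (a - b)]

lemma norm_exp_mul_I_sub_exp_mul_I (α β : ℝ) :
    ‖exp (α * I) - exp (β * I)‖ = 2 * |Real.sin ((α - β) / 2)| := by
  have h : exp (α * I) - exp (β * I) = exp (β * I) * (exp (I * ↑(α - β)) - 1) := by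
    rw [mul_sub, ← Complex.exp_add, mul_one]; push_cast; ring_nf
  rw [h, norm_mul, Complex.norm_exp_ofReal_mul_I, one_mul, norm_exp_I_mul_ofReal_sub_one,
    Real.norm_eq_abs, abs_mul, abs_two]

lemma two_mul_abs_sin_half_sub_le_norm_sub {R α β : ℝ} {v w : ℂ} (hR : 0 ≤ R)
    (hv : R ≤ ‖v‖) (hw : R ≤ ‖w‖) (hvα : v = ‖v‖ * exp (α * I)) (hwβ : w = ‖w‖ * exp (β * I)) :
    2 * R * |Real.sin ((α - β) / 2)| ≤ ‖v - w‖ := by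
  have h := mul_norm_sub_le_norm_smul_sub_smul (norm_exp_ofReal_mul_I α)
    (norm_exp_ofReal_mul_I β) hR hv hw
  rw [norm_exp_mul_I_sub_exp_mul_I, real_smul, real_smul, ← hvα, ← hwβ] at h
  linarith

lemma le_pi_div_two_of_sin_lt_one {φ : ℝ → ℝ} {a b : ℝ} (hφ : ContinuousOn φ (Icc a b))
    (ha : φ a ≤ π / 2) (hsin : ∀ s ∈ Ico a b, Real.sin (φ s) < 1) :
    ∀ t ∈ Icc a b, φ t ≤ π / 2 := by
  intro t ht
  by_contra! h
  obtain ⟨s, hs, hφs⟩ :=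
    intermediate_value_Icc ht.1 (hφ.mono (Icc_subset_Icc_right ht.2)) ⟨ha, h.le⟩
  have hsb : ¬ s < b := fun hsb => by
    simpa [hφs] using hsin s ⟨hs.1, hsb⟩
  have hst : s = t := le_antisymm hs.2 (by linarith [ht.2])
  exact h.ne' (hst ▸ hφs)

lemma le_arcsin_of_sin_le {x q : ℝ} (hx : x ≤ π / 2) (h : Real.sin x ≤ q) :
    x ≤ Real.arcsin q := by
  rcases le_or_gt x (-(π / 2)) with hx' | hx'
  · exact hx'.trans (Real.neg_pi_div_two_le_arcsin q)
  · exact (Real.le_arcsin_iff_sin_le' ⟨hx', hx⟩).2 h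

/-- If the lion moves at speed at most `1`, the man at speed at most `1+ε`, and
they stay at distance at least `r − Δ > 0` throughout an interval of length `Δ`,
then a continuous determination `ξ` of the angle of `m(t) − l(t)` increases by at
most `2·arcsin((2+ε)Δ/(2(r−Δ)))`. -/
theorem stmt_8 (ε r Δ tj : ℝ) (hε : 0 < ε) (hΔ : 0 < Δ) (hΔr : Δ < r)
    (hcond : (2 + ε) * Δ ≤ 2 * (r - Δ))
    (l m : ℝ → ℂ)
    (hl : ∀ s ∈ Icc tj (tj + Δ), ∀ t ∈ Icc tj (tj + Δ), ‖l s - l t‖ ≤ |s - t|)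
    (hm : ∀ s ∈ Icc tj (tj + Δ), ∀ t ∈ Icc tj (tj + Δ),
      ‖m s - m t‖ ≤ (1 + ε) * |s - t|)
    (hfar : ∀ t ∈ Icc tj (tj + Δ), r - Δ ≤ ‖m t - l t‖)
    (ξ : ℝ → ℝ) (hξc : ContinuousOn ξ (Icc tj (tj + Δ)))
    (hξ : ∀ t ∈ Icc tj (tj + Δ),
      m t = l t + (‖m t - l t‖ : ℂ) * Complex.exp ((ξ t : ℂ) * Complex.I)) :
    ∀ t ∈ Icc tj (tj + Δ),
      ξ t - ξ tj ≤ 2 * Real.arcsin ((2 + ε) * Δ / (2 * (r - Δ))) := by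
  intro t ht
  have hR : 0 < r - Δ := by linarith
  have hleft : tj ∈ Icc tj (tj + Δ) := left_mem_Icc.2 (by linarith)
  have hpolar : ∀ s ∈ Icc tj (tj + Δ), m s - l s = (‖m s - l s‖ : ℂ) * exp (ξ s * I) :=
    fun s hs => by rw [sub_eq_iff_eq_add', ← hξ s hs]
  have hsin : ∀ s ∈ Icc tj (tj + Δ),
      |Real.sin ((ξ s - ξ tj) / 2)| ≤ (2 + ε) * (s - tj) / (2 * (r - Δ)) := by
    intro s hs
    have hchord := two_mul_abs_sin_half_sub_le_norm_sub hR.le (hfar s hs) (hfar tj hleft)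
      (hpolar s hs) (hpolar tj hleft)
    have hm' := hm s hs tj hleft
    have hl' := hl s hs tj hleft
    rw [abs_of_nonneg (sub_nonneg.2 hs.1)] at hm' hl'
    rw [le_div_iff₀ (by positivity)]
    linarith [norm_sub_sub_sub_le (m s) (l s) (m tj) (l tj)]
  have hhalf : (ξ t - ξ tj) / 2 ≤ π / 2 := by
    refine le_pi_div_two_of_sin_lt_one (φ := fun s => (ξ s - ξ tj) / 2)
      ((hξc.sub continuousOn_const).div_const 2) (by simpa using Real.pi_div_two_pos.le) ?_ t ht
    intro s hs
    have hs' : s ∈ Icc tj (tj + Δ) := Ico_subset_Icc_self hs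
    calc Real.sin ((ξ s - ξ tj) / 2) ≤ (2 + ε) * (s - tj) / (2 * (r - Δ)) :=
          (le_abs_self _).trans (hsin s hs')
      _ < (2 + ε) * Δ / (2 * (r - Δ)) := by gcongr; linarith [hs.2]
      _ ≤ 1 := (div_le_one (by positivity)).2 hcond
  have hq : Real.sin ((ξ t - ξ tj) / 2) ≤ (2 + ε) * Δ / (2 * (r - Δ)) :=
    (le_abs_self _).trans ((hsin t ht).trans (by gcongr; linarith [ht.2]))
  linarith [le_arcsin_of_sin_le hhalf hq]
end

section
/- Let g ∈ ℝ² be fixed and l : [t_j, t_{j+1}] → ℝ² be 1-Lipschitz with ‖l(t) − g‖ ≥ ρ > 0 throughout, where t_{j+1} − t_j = Δ. Let η(t) be a continuous determination of the angle of g − l(t). Then η(t) − η(t_j) ≤ Δ/ρ for all t ∈ [t_j, t_{j+1}]. -/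
open Set

lemma my_arcsin_le_add_cube {x : ℝ} (h0 : 0 ≤ x) (h1 : x ≤ 1/2) :
    Real.arcsin x ≤ x + x ^ 3 := by
  rcases eq_or_lt_of_le h0 with rfl | hx
  · simp
  have hcube : x ^ 3 ≤ (1/2) ^ 3 := pow_le_pow_left₀ h0 h1 3
  have hsq : x ^ 2 ≤ (1/2) ^ 2 := pow_le_pow_left₀ h0 h1 2
  have hle : x + x ^ 3 ≤ 1 := by norm_num at hcube ⊢; linarith
  have hpos : (0:ℝ) < x + x ^ 3 := by positivity
  have hsin : x ≤ Real.sin (x + x ^ 3) := by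
    have h := Real.sin_gt_sub_cube hpos
    have h4 : x ^ 4 ≤ (1/2) ^ 4 := pow_le_pow_left₀ h0 h1 4
    have h6 : x ^ 6 ≤ (1/2) ^ 6 := pow_le_pow_left₀ h0 h1 6
    have h13 : (1 + x ^ 2) ^ 3 ≤ 4 := by norm_num at hsq h4 h6 ⊢; nlinarith
    have hkey : (x + x ^ 3) ^ 3 ≤ 4 * x ^ 3 := by
      have := mul_le_mul_of_nonneg_left h13 (pow_pos hx 3).le
      nlinarith
    nlinarith
  have hpi : x + x ^ 3 ≤ Real.pi / 2 := by
    have := Real.pi_gt_three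
    linarith
  calc Real.arcsin x ≤ Real.arcsin (Real.sin (x + x ^ 3)) := Real.monotone_arcsin hsin
    _ = x + x ^ 3 := Real.arcsin_sin (by linarith [Real.pi_pos]) hpi

lemma my_angle_step (ρ : ℝ) (hρ : 0 < ρ) (α β r r' c : ℝ) (hr : ρ ≤ r) (hr' : ρ ≤ r')
    (hc : ‖(r : ℂ) * Complex.exp ((α : ℂ) * Complex.I)
        - (r' : ℂ) * Complex.exp ((β : ℂ) * Complex.I)‖ ≤ c)
    (hπ : |α - β| < Real.pi) : |α - β| ≤ 2 * Real.arcsin (c / (2 * ρ)) := by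
  set z : ℂ := (r : ℂ) * Complex.exp ((α : ℂ) * Complex.I)
      - (r' : ℂ) * Complex.exp ((β : ℂ) * Complex.I) with hz
  have hre : z.re = r * Real.cos α - r' * Real.cos β := by
    simp [hz, Complex.exp_mul_I, Complex.cos_ofReal_re, Complex.sin_ofReal_re]
  have him : z.im = r * Real.sin α - r' * Real.sin β := by
    simp [hz, Complex.exp_mul_I, Complex.cos_ofReal_re, Complex.sin_ofReal_re]
  have hc0 : 0 ≤ c := le_trans (norm_nonneg z) hc
  have h2 : z.re ^ 2 + z.im ^ 2 ≤ c ^ 2 := by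
    have : ‖z‖ ^ 2 ≤ c ^ 2 := by nlinarith [norm_nonneg z]
    calc z.re ^ 2 + z.im ^ 2 = ‖z‖ ^ 2 := by
          rw [Complex.sq_norm, Complex.normSq_apply]; ring
      _ ≤ c ^ 2 := this
  rw [hre, him] at h2
  set s : ℝ := Real.sin ((α - β) / 2) with hs
  have hcos2 : Real.cos (α - β) = 1 - 2 * s ^ 2 := by
    have h := Real.sin_sq_eq_half_sub ((α - β) / 2)
    have : 2 * ((α - β) / 2) = α - β := by ring
    rw [this] at h
    rw [hs]; linarith
  have hcos : Real.cos (α - β) = Real.cos α * Real.cos β + Real.sin α * Real.sin β :=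
    Real.cos_sub α β
  have hrr : ρ ^ 2 ≤ r * r' := by nlinarith
  have expand : (r * Real.cos α - r' * Real.cos β) ^ 2 + (r * Real.sin α - r' * Real.sin β) ^ 2
      = r ^ 2 + r' ^ 2 - 2 * (r * r') * Real.cos (α - β) := by
    linear_combination (r ^ 2) * Real.sin_sq_add_cos_sq α
      + (r' ^ 2) * Real.sin_sq_add_cos_sq β + (2 * r * r') * hcos
  rw [expand, hcos2] at h2
  have key : 4 * ρ ^ 2 * s ^ 2 ≤ c ^ 2 := by
    nlinarith [sq_nonneg (r - r'), mul_nonneg (sub_nonneg.2 hrr) (sq_nonneg s)]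
  have habs : 2 * ρ * |s| ≤ c := by
    nlinarith [abs_nonneg s, sq_abs s]
  have hsle : |s| ≤ c / (2 * ρ) := by
    rw [le_div_iff₀ (by positivity)]; linarith
  have hsin_half : Real.sin (|α - β| / 2) ≤ c / (2 * ρ) := by
    rcases abs_cases (α - β) with ⟨h1, _⟩ | ⟨h1, _⟩
    · rw [h1]; exact le_trans (le_abs_self s) hsle
    · rw [h1, neg_div, Real.sin_neg]
      exact le_trans (neg_le_abs s) hsle
  have h0 : 0 ≤ |α - β| / 2 := by positivity
  have hhalf : |α - β| / 2 ≤ Real.pi / 2 := by linarith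
  have := calc |α - β| / 2 = Real.arcsin (Real.sin (|α - β| / 2)) :=
        (Real.arcsin_sin (by linarith [Real.pi_pos]) hhalf).symm
    _ ≤ Real.arcsin (c / (2 * ρ)) := Real.monotone_arcsin hsin_half
  linarith

/-- If the lion `l` is `1`-Lipschitz and stays at distance at least `ρ > 0` from
the fixed point `g` throughout an interval `[t_j, t_j + Δ]`, then a continuous
determination `η` of the angle of `g − l(t)` increases by at most `Δ/ρ`. -/
theorem stmt_9 (ρ Δ tj : ℝ) (hρ : 0 < ρ) (hΔ : 0 < Δ)
    (g : ℂ) (l : ℝ → ℂ)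
    (hl : ∀ s ∈ Icc tj (tj + Δ), ∀ t ∈ Icc tj (tj + Δ), ‖l s - l t‖ ≤ |s - t|)
    (hfar : ∀ t ∈ Icc tj (tj + Δ), ρ ≤ ‖l t - g‖)
    (η : ℝ → ℝ) (hηc : ContinuousOn η (Icc tj (tj + Δ)))
    (hη : ∀ t ∈ Icc tj (tj + Δ),
      g = l t + (‖l t - g‖ : ℂ) * Complex.exp ((η t : ℂ) * Complex.I)) :
    ∀ t ∈ Icc tj (tj + Δ), η t - η tj ≤ Δ / ρ := by
  intro t ht
  obtain ⟨ht1, ht2⟩ := ht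
  have huc : UniformContinuousOn η (Icc tj (tj + Δ)) :=
    isCompact_Icc.uniformContinuousOn_of_continuous hηc
  obtain ⟨δ, hδpos, hδ⟩ := Metric.uniformContinuousOn_iff.mp huc Real.pi Real.pi_pos
  have main : ∀ ε > 0, η t - η tj ≤ Δ / ρ + ε := by
    intro ε hε
    obtain ⟨n, hn⟩ :=
      exists_nat_gt (max (max (Δ/δ) (Δ/ρ)) (max (Δ^3/(4*ρ^3*ε)) 1))
    obtain ⟨m, hm⟩ : ∃ m : ℝ, m = (n : ℝ) := ⟨_, rfl⟩
    rw [← hm] at hn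
    have hm1 : 1 ≤ m :=
      le_of_lt (lt_of_le_of_lt (le_trans (le_max_right _ _) (le_max_right _ _)) hn)
    have hm0 : 0 < m := by linarith
    have hmδ : Δ / m < δ := by
      have h1 : Δ / δ < m :=
        lt_of_le_of_lt (le_trans (le_max_left _ _) (le_max_left _ _)) hn
      rw [div_lt_iff₀ hm0]
      rw [div_lt_iff₀ hδpos] at h1
      linarith [mul_comm δ m]
    have hmρ : Δ / ρ < m :=
      lt_of_le_of_lt (le_trans (le_max_right _ _) (le_max_left _ _)) hn
    have hmε : Δ^3/(4*ρ^3*ε) < m :=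
      lt_of_le_of_lt (le_trans (le_max_left _ _) (le_max_right _ _)) hn
    obtain ⟨h, hhdef⟩ : ∃ h : ℝ, h = (t - tj) / m := ⟨_, rfl⟩
    have htt : 0 ≤ t - tj := by linarith
    have hh0 : 0 ≤ h := by rw [hhdef]; positivity
    have hhΔ : h ≤ Δ / m := by
      rw [hhdef]; gcongr; linarith
    obtain ⟨x, hxdef⟩ : ∃ x : ℝ, x = Δ / (2 * ρ * m) := ⟨_, rfl⟩
    have hx0 : 0 ≤ x := by rw [hxdef]; positivity
    have hxhalf : x ≤ 1 / 2 := by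
      rw [hxdef, div_le_iff₀ (by positivity)]
      rw [div_lt_iff₀ hρ] at hmρ
      nlinarith
    have hmem : ∀ i : ℕ, i ≤ n → tj + i * h ∈ Icc tj (tj + Δ) := by
      intro i hi
      have hin : (i : ℝ) ≤ m := by rw [hm]; exact_mod_cast hi
      constructor
      · nlinarith [mul_nonneg (Nat.cast_nonneg i : (0:ℝ) ≤ i) hh0]
      · have h1 : (i : ℝ) * h ≤ m * h := by
          apply mul_le_mul_of_nonneg_right hin hh0
        have h2 : m * h = t - tj := by
          rw [hhdef]; field_simp
        nlinarith
    have step : ∀ i, i < n → η (tj + (i + 1) * h) - η (tj + i * h) ≤ 2 * Real.arcsin x := by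
      intro i hi
      set a : ℝ := tj + i * h with hadef
      set b : ℝ := tj + (i + 1) * h with hbdef
      have ha : a ∈ Icc tj (tj + Δ) := hmem i hi.le
      have hb : b ∈ Icc tj (tj + Δ) := by
        have := hmem (i + 1) hi
        push_cast at this ⊢
        exact this
      have hba : b - a = h := by rw [hadef, hbdef]; ring
      have hdist : dist b a < δ := by
        rw [Real.dist_eq, hba, abs_of_nonneg hh0]
        exact lt_of_le_of_lt hhΔ hmδ
      have hπ' : |η b - η a| < Real.pi := by
        have := hδ b hb a ha hdist
        rwa [Real.dist_eq] at this
      have e1 := hη b hb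
      have e2 := hη a ha
      have hz : (‖l b - g‖ : ℂ) * Complex.exp ((η b : ℂ) * Complex.I)
          - (‖l a - g‖ : ℂ) * Complex.exp ((η a : ℂ) * Complex.I) = l a - l b := by
        linear_combination e2 - e1
      have hnorm : ‖(‖l b - g‖ : ℂ) * Complex.exp ((η b : ℂ) * Complex.I)
          - (‖l a - g‖ : ℂ) * Complex.exp ((η a : ℂ) * Complex.I)‖ ≤ h := by
        rw [hz]
        calc ‖l a - l b‖ ≤ |a - b| := hl a ha b hb
          _ = h := by rw [abs_sub_comm, hba, abs_of_nonneg hh0]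
      have hstep := my_angle_step ρ hρ (η b) (η a) _ _ h (hfar b hb) (hfar a ha) hnorm hπ'
      have hx' : x = (Δ / m) / (2 * ρ) := by
        rw [hxdef, div_div]; ring_nf
      have harc : Real.arcsin (h / (2 * ρ)) ≤ Real.arcsin x := by
        apply Real.monotone_arcsin
        rw [hx']
        gcongr
      calc η b - η a ≤ |η b - η a| := le_abs_self _
        _ ≤ 2 * Real.arcsin (h / (2 * ρ)) := hstep
        _ ≤ 2 * Real.arcsin x := by linarith
    have tele : η t - η tj ≤ m * (2 * Real.arcsin x) := by
      have e : ∑ i ∈ Finset.range n, (η (tj + ((i + 1 : ℕ) : ℝ) * h) - η (tj + (i : ℝ) * h))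
          = η (tj + (n : ℝ) * h) - η (tj + ((0 : ℕ) : ℝ) * h) :=
        Finset.sum_range_sub (fun i : ℕ => η (tj + (i : ℝ) * h)) n
      have hend : tj + (n : ℝ) * h = t := by
        rw [hhdef, ← hm]; field_simp; ring
      rw [hend, Nat.cast_zero, zero_mul, add_zero] at e
      have hb2 : ∑ i ∈ Finset.range n, (η (tj + ((i + 1 : ℕ) : ℝ) * h) - η (tj + (i : ℝ) * h))
          ≤ ∑ _i ∈ Finset.range n, (2 * Real.arcsin x) := by
        apply Finset.sum_le_sum
        intro i hi
        have hstepi := step i (Finset.mem_range.mp hi)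
        push_cast
        push_cast at hstepi
        exact hstepi
      rw [e, Finset.sum_const, Finset.card_range, nsmul_eq_mul] at hb2
      rw [hm]
      exact hb2
    have harc2 : Real.arcsin x ≤ x + x ^ 3 := my_arcsin_le_add_cube hx0 hxhalf
    have heq : m * (2 * (x + x ^ 3)) = Δ / ρ + Δ ^ 3 / (4 * ρ ^ 3 * m ^ 2) := by
      rw [hxdef]; field_simp; ring
    have hee : Δ ^ 3 / (4 * ρ ^ 3 * m ^ 2) ≤ ε := by
      rw [div_le_iff₀ (by positivity)]
      rw [div_lt_iff₀ (by positivity)] at hmε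
      have hm2 : m ≤ m ^ 2 := by nlinarith
      nlinarith [mul_le_mul_of_nonneg_left hm2 (by positivity : (0:ℝ) ≤ 4 * ρ ^ 3 * ε)]
    calc η t - η tj ≤ m * (2 * Real.arcsin x) := tele
      _ ≤ m * (2 * (x + x ^ 3)) := by
        apply mul_le_mul_of_nonneg_left (by linarith) (by linarith)
      _ = Δ / ρ + Δ ^ 3 / (4 * ρ ^ 3 * m ^ 2) := heq
      _ ≤ Δ / ρ + ε := by linarith
  by_contra hcon
  push_neg at hcon
  have := main ((η t - η tj - Δ / ρ)/2) (by linarith)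
  linarith
end

section
/- Let l : [t_j, t_{j+1}] → ℝ² be 1-Lipschitz with t_{j+1} − t_j = Δ, and suppose the man is at q_j at time t_{j+1} with ‖q_j − l(t_j)‖ = r, then moves to a point q_{j+1} with ‖q_{j+1} − l(t_{j+1})‖ = r and ‖q_j − q_{j+1}‖ ≥ (1+ε)Δ. Let q'_{j+1} = q_j + (l(t_{j+1}) − l(t_j)). Then ‖q_{j+1} − q'_{j+1}‖ ≥ εΔ, and consequently the angle on the circle of radius r centered at l(t_{j+1}) between q'_{j+1} and q_{j+1} is at least εΔ/r. -/
open Set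

/-!
The shifted point `q'_{j+1}` differs from `q_j` by the lion's displacement, which is at most `Δ`,
so the triangle inequality turns the step length `(1 + ε)Δ` into a chord of length at least `εΔ`.
The central angle `2 arcsin (chord / 2r)` dominates `chord / r` because `x ≤ arcsin x` on `[0, 1]`.
-/

namespace Real

theorem self_le_arcsin {x : ℝ} (hx₀ : 0 ≤ x) (hx₁ : x ≤ 1) : x ≤ arcsin x := by
  simpa [sin_arcsin (by linarith) hx₁] using sin_le (arcsin_nonneg.2 hx₀)

theorem div_le_two_mul_arcsin_div {a d r : ℝ} (hr : 0 < r) (ha : 0 ≤ a) (ha_le : a ≤ 2 * r)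
    (had : a ≤ d) : a / r ≤ 2 * arcsin (d / (2 * r)) :=
  calc a / r = 2 * (a / (2 * r)) := by field_simp
    _ ≤ 2 * arcsin (a / (2 * r)) := by
      gcongr
      exact self_le_arcsin (by positivity) ((div_le_one (by positivity)).2 ha_le)
    _ ≤ 2 * arcsin (d / (2 * r)) := by gcongr

end Real

theorem stmt_12_general (r Δ ε tj : ℝ) (hr : 0 < r) (hΔ : 0 < Δ) (hε : 0 < ε)
    (hεΔ : ε * Δ ≤ 2 * r)
    (l : ℝ → ℂ)
    (hl : ∀ s ∈ Icc tj (tj + Δ), ∀ t ∈ Icc tj (tj + Δ), ‖l s - l t‖ ≤ |s - t|)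
    (qj qj1 : ℂ)
    (hstep : (1 + ε) * Δ ≤ ‖qj - qj1‖) :
    ε * Δ ≤ ‖qj1 - (qj + (l (tj + Δ) - l tj))‖
    ∧ ε * Δ / r
      ≤ 2 * Real.arcsin (‖qj1 - (qj + (l (tj + Δ) - l tj))‖ / (2 * r)) := by
  have hlion : ‖l (tj + Δ) - l tj‖ ≤ Δ := by
    simpa [abs_of_pos hΔ] using hl (tj + Δ) ⟨by linarith, le_rfl⟩ tj ⟨le_rfl, by linarith⟩
  have hchord : ε * Δ ≤ ‖qj1 - (qj + (l (tj + Δ) - l tj))‖ := by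
    have htri := norm_sub_le_norm_sub_add_norm_sub qj1 (qj + (l (tj + Δ) - l tj)) qj
    rw [norm_sub_rev, add_sub_cancel_left] at htri
    linarith
  exact ⟨hchord, Real.div_le_two_mul_arcsin_div hr (by positivity) hεΔ hchord⟩

/-- If `‖q_j − l(t_j)‖ = r`, `‖q_{j+1} − l(t_j+Δ)‖ = r`, `‖q_j − q_{j+1}‖ ≥ (1+ε)Δ`,
and the lion `l` is `1`-Lipschitz, then with `q'_{j+1} = q_j + (l(t_j+Δ) − l(t_j))`
we have `‖q_{j+1} − q'_{j+1}‖ ≥ εΔ`, and the central angle `α` on the circle of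
radius `r` centered at `l(t_j+Δ)` between `q'_{j+1}` and `q_{j+1}`, determined by
`2r·sin(α/2) = ‖q_{j+1} − q'_{j+1}‖` (i.e. `α = 2·arcsin(chord/(2r))`), is at
least `εΔ/r`. -/
theorem stmt_12 (r Δ ε tj : ℝ) (hr : 0 < r) (hΔ : 0 < Δ) (hε : 0 < ε)
    (hεΔ : ε * Δ ≤ 2 * r)
    (l : ℝ → ℂ)
    (hl : ∀ s ∈ Icc tj (tj + Δ), ∀ t ∈ Icc tj (tj + Δ), ‖l s - l t‖ ≤ |s - t|)
    (qj qj1 : ℂ)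
    (hqj : ‖qj - l tj‖ = r)
    (hqj1 : ‖qj1 - l (tj + Δ)‖ = r)
    (hstep : (1 + ε) * Δ ≤ ‖qj - qj1‖) :
    ε * Δ ≤ ‖qj1 - (qj + (l (tj + Δ) - l tj))‖
    ∧ ε * Δ / r
      ≤ 2 * Real.arcsin (‖qj1 - (qj + (l (tj + Δ) - l tj))‖ / (2 * r)) :=
  stmt_12_general r Δ ε tj hr hΔ hε hεΔ l hl qj qj1 hstep
end
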